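/- Let a ∈ (0,∞), let P be a finite subset of (0,a), and let S : ℝ → ℝ satisfy conditions (S1)–(S4): (S1) S(−x) = −S(x) and S(a+x) = −S(x) for x ∈ [0,∞); (S2) 0 < S(x) < x for x ∈ (0,a); (S3) S ∈ C([0,a]) ∩ C¹([0,a)) ∩ C²([0,a) \ P); (S4) S'(x)² − S''(x)·S(x) ≥ 1 for x ∈ [0,a) \ P. Then the function f(x) := x²(x + S(x))/(x − S(x)) is strictly decreasing on (0,a), and consequently f(x) > f(a) = a², i.e. a² < x²(x + S(x))/(x − S(x)) for all x ∈ (0,a). -/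

import Mathlib

/-!
With `f x = x²(x + S x)/(x - S x)` one computes `f' = -2x·n/(x - S)²`, where
`n = S² + xS - x² - x²S'`, so everything reduces to `n > 0` on `(0, a)`. The quotient `m = n/S`
satisfies the linear differential inequality `m' + ψ m > 0` off `P`, with `ψ = (x - S)²/(x²S) ≥ 0`;
this is where (S4) enters. Moreover `m → 0` at `0⁺`, because `S x / x → S'(0) ≠ 0`, the latter by
(S4) at `0`. Multiplying by the integrating factor `exp ∫ ψ` then forces `m > 0`. Finally `f` is
continuous at `a`, where `S a = 0` by (S1), so `f > f a = a²` on `(0, a)`.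
-/

open Real Set Filter Topology

theorem strictMonoOn_Icc_of_deriv_pos_of_finite {P : Set ℝ} (hP : P.Finite) {f : ℝ → ℝ}
    {u v : ℝ} (hf : ContinuousOn f (Icc u v)) (hf' : ∀ x ∈ Ioo u v \ P, 0 < deriv f x) :
    StrictMonoOn f (Icc u v) := by
  induction P, hP using Set.Finite.induction_on generalizing u v with
  | empty =>
    refine strictMonoOn_of_deriv_pos (convex_Icc u v) hf fun x hx => hf' x ?_
    simpa [interior_Icc] using hx
  | @insert p Q _ _ ih =>
    by_cases hp : p ∈ Ioo u v
    · have hleft : StrictMonoOn f (Icc u p) :=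
        ih (hf.mono (Icc_subset_Icc_right hp.2.le)) fun x hx =>
          hf' x ⟨⟨hx.1.1, hx.1.2.trans hp.2⟩, by simp [hx.1.2.ne, hx.2]⟩
      have hright : StrictMonoOn f (Icc p v) :=
        ih (hf.mono (Icc_subset_Icc_left hp.1.le)) fun x hx =>
          hf' x ⟨⟨hp.1.trans hx.1.1, hx.1.2⟩, by simp [hx.1.1.ne', hx.2]⟩
      rw [← Icc_union_Icc_eq_Icc hp.1.le hp.2.le]
      exact hleft.union hright (isGreatest_Icc hp.1.le) (isLeast_Icc hp.2.le)
    · exact ih hf fun x hx => hf' x ⟨hx.1, by rintro (rfl | h) <;> simp_all⟩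

theorem pos_of_strictMonoOn_Ioc_of_tendsto {W : ℝ → ℝ} {c b : ℝ} (hcb : c < b)
    (hW : StrictMonoOn W (Ioc c b)) (hlim : Tendsto W (𝓝[>] c) (𝓝 0)) : 0 < W b := by
  obtain ⟨u, hu⟩ : (Ioo c b).Nonempty := nonempty_Ioo.2 hcb
  have hWu : 0 ≤ W u := by
    refine le_of_tendsto hlim ?_
    filter_upwards [Ioo_mem_nhdsGT hu.1] with y hy
    exact (hW ⟨hy.1, (hy.2.trans hu.2).le⟩ ⟨hu.1, hu.2.le⟩ hy.2).le
  exact hWu.trans_lt (hW ⟨hu.1, hu.2.le⟩ ⟨hcb, le_rfl⟩ hu.2)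

theorem pos_of_deriv_add_mul_pos {P : Set ℝ} (hP : P.Finite) {m ψ : ℝ → ℝ} {c b : ℝ}
    (hm : ContinuousOn m (Ioo c b)) (hψ : ContinuousOn ψ (Ioo c b))
    (hψ_nonneg : ∀ x ∈ Ioo c b, 0 ≤ ψ x) (hmd : ∀ x ∈ Ioo c b \ P, DifferentiableAt ℝ m x)
    (hpos : ∀ x ∈ Ioo c b \ P, 0 < deriv m x + ψ x * m x) (hlim : Tendsto m (𝓝[>] c) (𝓝 0)) :
    ∀ x ∈ Ioo c b, 0 < m x := by
  intro x₀ hx₀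
  set Ψ : ℝ → ℝ := fun y => ∫ t in x₀..y, ψ t
  have hΨ : ∀ y ∈ Ioo c b, HasDerivAt Ψ (ψ y) y := fun y hy =>
    intervalIntegral.integral_hasDerivAt_right
      ((hψ.mono (ordConnected_Ioo.uIcc_subset hx₀ hy)).intervalIntegrable)
      (hψ.stronglyMeasurableAtFilter isOpen_Ioo y hy)
      (hψ.continuousAt (isOpen_Ioo.mem_nhds hy))
  set W : ℝ → ℝ := fun y => m y * exp (Ψ y)
  have hW_cont : ContinuousOn W (Ioo c b) :=
    hm.mul (continuous_exp.comp_continuousOn fun y hy => (hΨ y hy).continuousAt.continuousWithinAt)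
  have hW_mono : StrictMonoOn W (Ioc c x₀) := fun u hu v hv huv => by
    have hsub : Icc u x₀ ⊆ Ioo c b := Icc_subset_Ioo hu.1 hx₀.2
    refine strictMonoOn_Icc_of_deriv_pos_of_finite hP (hW_cont.mono hsub) ?_
      (left_mem_Icc.2 hu.2) ⟨huv.le, hv.2⟩ huv
    intro y hy
    have hy' : y ∈ Ioo c b \ P := ⟨hsub (Ioo_subset_Icc_self hy.1), hy.2⟩
    have hW' : HasDerivAt W (exp (Ψ y) * (deriv m y + ψ y * m y)) y :=
      ((hmd y hy').hasDerivAt.mul (hΨ y hy'.1).exp).congr_deriv (by ring)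
    rw [hW'.deriv]
    exact mul_pos (exp_pos _) (hpos y hy')
  have hW_lim : Tendsto W (𝓝[>] c) (𝓝 0) := by
    refine squeeze_zero_norm' ?_ (by simpa using hlim.norm)
    filter_upwards [Ioo_mem_nhdsGT hx₀.1] with y hy
    have hΨ_nonpos : Ψ y ≤ 0 := by
      rw [show Ψ y = -∫ t in y..x₀, ψ t from intervalIntegral.integral_symm _ _, neg_nonpos]
      exact intervalIntegral.integral_nonneg hy.2.le fun t ht =>
        hψ_nonneg t ⟨hy.1.trans_le ht.1, ht.2.trans_lt hx₀.2⟩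
    rw [norm_mul, norm_of_nonneg (exp_pos _).le]
    exact mul_le_of_le_one_right (norm_nonneg _) (exp_le_one_iff.2 hΨ_nonpos)
  have hWx₀ : W x₀ = m x₀ := by simp [W, Ψ]
  exact hWx₀ ▸ pos_of_strictMonoOn_Ioc_of_tendsto hx₀.1 hW_mono hW_lim

theorem continuousOn_deriv_of_contDiffOn_Ico {f : ℝ → ℝ} {c a : ℝ}
    (hf : ContDiffOn ℝ 1 f (Ico c a)) (hc : DifferentiableAt ℝ f c) :
    ContinuousOn (deriv f) (Ico c a) := by
  refine (hf.continuousOn_derivWithin (uniqueDiffOn_Ico c a) le_rfl).congr fun y hy => ?_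
  refine (DifferentiableAt.derivWithin ?_ (uniqueDiffOn_Ico c a y hy)).symm
  rcases hy.1.eq_or_lt with rfl | hcy
  · exact hc
  · exact (hf.contDiffAt (Ico_mem_nhds hcy hy.2)).differentiableAt one_ne_zero

theorem hasDerivAt_deriv_of_contDiffOn {f : ℝ → ℝ} {s : Set ℝ} {x : ℝ}
    (hf : ContDiffOn ℝ 2 f s) (hs : IsOpen s) (hx : x ∈ s) :
    HasDerivAt (deriv f) (deriv (deriv f) x) x :=
  (((hf.deriv_of_isOpen hs (m := 1) le_rfl).contDiffAt (hs.mem_nhds hx)).differentiableAt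
    one_ne_zero).hasDerivAt

noncomputable def fDerivNumerator (S : ℝ → ℝ) (x : ℝ) : ℝ :=
  S x ^ 2 + x * S x - x ^ 2 - x ^ 2 * deriv S x

section
variable {S : ℝ → ℝ} {x : ℝ}

theorem hasDerivAt_sq_mul_add_div_sub (hS : HasDerivAt S (deriv S x) x) (hx : x - S x ≠ 0) :
    HasDerivAt (fun y => y ^ 2 * (y + S y) / (y - S y))
      (-2 * x * fDerivNumerator S x / (x - S x) ^ 2) x := by
  refine (((hasDerivAt_pow 2 x).mul ((hasDerivAt_id' x).add hS)).div
    ((hasDerivAt_id' x).sub hS) hx).congr_deriv ?_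
  simp only [fDerivNumerator, Pi.add_apply, Pi.sub_apply, Pi.mul_apply]
  field_simp
  ring

theorem hasDerivAt_fDerivNumerator_div (hS : HasDerivAt S (deriv S x) x)
    (hS' : HasDerivAt (deriv S) (deriv (deriv S) x) x) (hSx : S x ≠ 0) :
    HasDerivAt (fun y => fDerivNumerator S y / S y)
      (((2 * S x * deriv S x + S x - x * deriv S x - 2 * x - x ^ 2 * deriv (deriv S) x) * S x
        - fDerivNumerator S x * deriv S x) / S x ^ 2) x := by
  have hn : HasDerivAt (fDerivNumerator S)
      (2 * S x * deriv S x + S x - x * deriv S x - 2 * x - x ^ 2 * deriv (deriv S) x) x := by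
    refine ((((hS.pow 2).add ((hasDerivAt_id' x).mul hS)).sub (hasDerivAt_pow 2 x)).sub
      ((hasDerivAt_pow 2 x).mul hS')).congr_deriv ?_
    simp only [Nat.cast_ofNat]
    ring
  exact hn.div hS hSx

theorem deriv_fDerivNumerator_div_add_pos (hS : HasDerivAt S (deriv S x) x)
    (hS' : HasDerivAt (deriv S) (deriv (deriv S) x) x) (hS_pos : 0 < S x) (hS_lt : S x < x)
    (hS4 : 1 ≤ deriv S x ^ 2 - deriv (deriv S) x * S x) :
    0 < deriv (fun y => fDerivNumerator S y / S y) x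
      + (x - S x) ^ 2 / (x ^ 2 * S x) * (fDerivNumerator S x / S x) := by
  rw [(hasDerivAt_fDerivNumerator_div hS hS' hS_pos.ne').deriv]
  have hx : 0 < x := hS_pos.trans hS_lt
  have key : ((2 * S x * deriv S x + S x - x * deriv S x - 2 * x - x ^ 2 * deriv (deriv S) x)
        * S x - fDerivNumerator S x * deriv S x) / S x ^ 2
        + (x - S x) ^ 2 / (x ^ 2 * S x) * (fDerivNumerator S x / S x)
      = ((S x + x) * (x - S x) ^ 2 / x ^ 2
        + x ^ 2 * (deriv S x ^ 2 - deriv (deriv S) x * S x - 1) / S x) / S x := by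
    simp only [fDerivNumerator]
    field_simp
    ring
  have : 0 < (x - S x) ^ 2 := by nlinarith
  have : 0 ≤ deriv S x ^ 2 - deriv (deriv S) x * S x - 1 := by linarith
  rw [key]
  positivity

theorem tendsto_fDerivNumerator_div_nhdsGT_zero {L c : ℝ} (hS : HasDerivAt S L 0)
    (hS0 : S 0 = 0) (hL : L ≠ 0) (hS' : Tendsto (deriv S) (𝓝[>] 0) (𝓝 c)) :
    Tendsto (fun x => fDerivNumerator S x / S x) (𝓝[>] 0) (𝓝 0) := by
  have hslope : Tendsto (fun x => S x / x) (𝓝[>] 0) (𝓝 L) := by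
    simpa [hS0, div_eq_inv_mul] using hS.tendsto_slope_zero_right
  have hid : Tendsto (fun x : ℝ => x) (𝓝[>] 0) (𝓝 0) := nhdsWithin_le_nhds
  have hS_lim : Tendsto S (𝓝[>] 0) (𝓝 0) := by
    simpa [hS0] using hS.continuousAt.tendsto.mono_left nhdsWithin_le_nhds
  have hlim : Tendsto (fun x => S x + x - x * (S x / x)⁻¹ * (1 + deriv S x)) (𝓝[>] 0) (𝓝 0) := by
    simpa using (hS_lim.add hid).sub ((hid.mul (hslope.inv₀ hL)).mul (hS'.const_add 1))
  refine hlim.congr' ?_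
  filter_upwards [self_mem_nhdsWithin, hslope.eventually_ne hL] with x hx hSx
  have hx : x ≠ 0 := ne_of_gt hx
  have hSx : S x ≠ 0 := by rintro h; simp [h] at hSx
  simp only [fDerivNumerator]
  field_simp
  ring

theorem fDerivNumerator_pos {a : ℝ} {P : Set ℝ} (hP : P.Finite) (hP0 : 0 ∉ P) (hS0 : S 0 = 0)
    (hS2 : ∀ x ∈ Ioo 0 a, 0 < S x ∧ S x < x) (hC1 : ContDiffOn ℝ 1 S (Ico 0 a))
    (hC2 : ContDiffOn ℝ 2 S (Ico 0 a \ P))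
    (hS4 : ∀ x ∈ Ico 0 a \ P, 1 ≤ deriv S x ^ 2 - deriv (deriv S) x * S x) :
    ∀ x ∈ Ioo 0 a, 0 < fDerivNumerator S x := by
  intro x hx
  have ha : 0 < a := hx.1.trans hx.2
  have hd1 : ∀ y ∈ Ioo 0 a, HasDerivAt S (deriv S y) y := fun y hy =>
    ((hC1.contDiffAt (Ico_mem_nhds hy.1 hy.2)).differentiableAt one_ne_zero).hasDerivAt
  have hd2 : ∀ y ∈ Ioo 0 a \ P, HasDerivAt (deriv S) (deriv (deriv S) y) y :=
    fun y => hasDerivAt_deriv_of_contDiffOn (hC2.mono (sdiff_subset_sdiff_left Ioo_subset_Ico_self))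
      (isOpen_Ioo.sdiff hP.isClosed)
  -- As `S 0 = 0`, (S4) at `0` says `S'(0)² ≥ 1`; since `deriv` is `0` at points of
  -- non-differentiability, `S` is differentiable at `0`.
  have hL : deriv S 0 ≠ 0 := fun h => by
    have := hS4 0 ⟨⟨le_rfl, ha⟩, hP0⟩
    norm_num [h, hS0] at this
  have hd0 : HasDerivAt S (deriv S 0) 0 := (differentiableAt_of_deriv_ne_zero hL).hasDerivAt
  have hdc := continuousOn_deriv_of_contDiffOn_Ico hC1 hd0.differentiableAt
  have hlim := tendsto_fDerivNumerator_div_nhdsGT_zero hd0 hS0 hL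
    ((hdc 0 ⟨le_rfl, ha⟩).tendsto.mono_left
      ((nhdsWithin_Ioo_eq_nhdsGT ha).symm.le.trans (nhdsWithin_mono _ Ioo_subset_Ico_self)))
  have hSc : ContinuousOn S (Ioo 0 a) := hC1.continuousOn.mono Ioo_subset_Ico_self
  have hn_cont : ContinuousOn (fDerivNumerator S) (Ioo 0 a) :=
    (((hSc.pow 2).add (continuousOn_id.mul hSc)).sub (continuousOn_pow 2)).sub
      ((continuousOn_pow 2).mul (hdc.mono Ioo_subset_Ico_self))
  have hψ_pos : ∀ y ∈ Ioo 0 a, 0 < y ^ 2 * S y := fun y hy => by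
    have := (hS2 y hy).1
    have := hy.1
    positivity
  have hpos := pos_of_deriv_add_mul_pos hP (m := fun y => fDerivNumerator S y / S y)
    (hn_cont.div hSc fun y hy => (hS2 y hy).1.ne')
    (((continuousOn_id.sub hSc).pow 2).div ((continuousOn_pow 2).mul hSc) fun y hy =>
      (hψ_pos y hy).ne')
    (fun y hy => div_nonneg (sq_nonneg _) (hψ_pos y hy).le)
    (fun y hy => (hasDerivAt_fDerivNumerator_div (hd1 y hy.1) (hd2 y hy)
      (hS2 y hy.1).1.ne').differentiableAt)
    (fun y hy => deriv_fDerivNumerator_div_add_pos (hd1 y hy.1) (hd2 y hy) (hS2 y hy.1).1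
      (hS2 y hy.1).2 (hS4 y ⟨Ioo_subset_Ico_self hy.1, hy.2⟩))
    hlim x hx
  exact (div_pos_iff_of_pos_right (hS2 x hx).1).1 hpos

theorem strictAntiOn_sq_mul_add_div_sub {a : ℝ} (hSc : ContinuousOn S (Ioc 0 a))
    (hS_lt : ∀ x ∈ Ioc 0 a, S x < x) (hd : DifferentiableOn ℝ S (Ioo 0 a))
    (hn : ∀ x ∈ Ioo 0 a, 0 < fDerivNumerator S x) :
    StrictAntiOn (fun x => x ^ 2 * (x + S x) / (x - S x)) (Ioc 0 a) := by
  refine strictAntiOn_of_deriv_neg (convex_Ioc 0 a) ?_ fun x hx => ?_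
  · exact ((continuousOn_pow 2).mul (continuousOn_id.add hSc)).div (continuousOn_id.sub hSc)
      fun x hx => (sub_pos.2 (hS_lt x hx)).ne'
  rw [interior_Ioc] at hx
  have hx' : 0 < x - S x := sub_pos.2 (hS_lt x (Ioo_subset_Ioc_self hx))
  rw [(hasDerivAt_sq_mul_add_div_sub (hd.differentiableAt (isOpen_Ioo.mem_nhds hx)).hasDerivAt
    hx'.ne').deriv]
  have := mul_pos hx.1 (hn x hx)
  exact div_neg_of_neg_of_pos (by linarith) (by positivity)

end

theorem f_strictAnti_and_lower_bound (a : ℝ) (ha : 0 < a) (P : Set ℝ)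
    (hPfin : P.Finite) (hPsub : P ⊆ Ioo 0 a) (S : ℝ → ℝ)
    (hS1 : ∀ x ∈ Ici (0:ℝ), S (-x) = -S x ∧ S (a + x) = -S x)
    (hS2 : ∀ x ∈ Ioo 0 a, 0 < S x ∧ S x < x)
    (hS3 : ContinuousOn S (Icc 0 a) ∧ ContDiffOn ℝ 1 S (Ico 0 a) ∧
      ContDiffOn ℝ 2 S (Ico 0 a \ P))
    (hS4 : ∀ x ∈ Ico 0 a \ P, (deriv S x) ^ 2 - deriv (deriv S) x * S x ≥ 1) :
    StrictAntiOn (fun x => x ^ 2 * (x + S x) / (x - S x)) (Ioo 0 a) ∧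
      a ^ 2 * (a + S a) / (a - S a) = a ^ 2 ∧
      ∀ x ∈ Ioo 0 a, a ^ 2 < x ^ 2 * (x + S x) / (x - S x) := by
  obtain ⟨hSc, hC1, hC2⟩ := hS3
  have hS0 : S 0 = 0 := by
    have := (hS1 0 (mem_Ici.2 le_rfl)).1
    rw [neg_zero] at this
    linarith
  have hSa : S a = 0 := by simpa [hS0] using (hS1 0 (mem_Ici.2 le_rfl)).2
  have hS_lt : ∀ x ∈ Ioc 0 a, S x < x := fun x hx => by
    rcases hx.2.eq_or_lt with rfl | hxa
    · rwa [hSa]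
    · exact (hS2 x ⟨hx.1, hxa⟩).2
  have hanti := strictAntiOn_sq_mul_add_div_sub (hSc.mono Ioc_subset_Icc_self) hS_lt
    ((hC1.differentiableOn one_ne_zero).mono Ioo_subset_Ico_self)
    (fDerivNumerator_pos hPfin (fun h => (hPsub h).1.false) hS0 hS2 hC1 hC2 hS4)
  have hfa : a ^ 2 * (a + S a) / (a - S a) = a ^ 2 := by
    rw [hSa, add_zero, sub_zero, mul_div_cancel_right₀ _ ha.ne']
  exact ⟨hanti.mono Ioo_subset_Ioc_self, hfa,
    fun x hx => hfa ▸ hanti (Ioo_subset_Ioc_self hx) ⟨ha, le_rfl⟩ hx.2⟩
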